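/- The functions c₁ and c₂ are both strictly increasing on ℝ and satisfy c₁(0) = 0 and c₂(0) = 0. -/
import Mathlib


/-- The order-parameter function `c₁`. -/
noncomputable def c1 (α : ℝ) : ℝ :=
  (∫ θ in (0:ℝ)..Real.pi,
      (1/3) * (2 * Real.cos θ + 1) * Real.sin (θ/2) ^ 2 * Real.exp (α * Real.cos θ)) /
  (∫ θ in (0:ℝ)..Real.pi, Real.sin (θ/2) ^ 2 * Real.exp (α * Real.cos θ))

/-- The order-parameter function `c₂`. -/
noncomputable def c2 (α : ℝ) : ℝ :=
  (1 / Real.sqrt 3) *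
  ((∫ φ in (0:ℝ)..Real.pi,
      Real.cos φ * Real.sin φ * Real.exp ((Real.sqrt 3 / 2) * α * Real.cos φ)) /
   (∫ φ in (0:ℝ)..Real.pi, Real.sin φ * Real.exp ((Real.sqrt 3 / 2) * α * Real.cos φ)))

open Real MeasureTheory intervalIntegral Set

noncomputable def DD (w : ℝ → ℝ) (γ : ℝ) : ℝ :=
  ∫ θ in (0:ℝ)..Real.pi, w θ * Real.exp (γ * Real.cos θ)

noncomputable def NN (w : ℝ → ℝ) (γ : ℝ) : ℝ :=
  ∫ θ in (0:ℝ)..Real.pi, Real.cos θ * w θ * Real.exp (γ * Real.cos θ)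

variable {w : ℝ → ℝ}

lemma contD (hw : Continuous w) (γ : ℝ) :
    Continuous fun θ => w θ * Real.exp (γ * Real.cos θ) := by fun_prop

lemma contN (hw : Continuous w) (γ : ℝ) :
    Continuous fun θ => Real.cos θ * w θ * Real.exp (γ * Real.cos θ) := by fun_prop

lemma DD_pos (hw : Continuous w) (hpos : ∀ x ∈ Set.Ioo (0:ℝ) Real.pi, 0 < w x) (γ : ℝ) :
    0 < DD w γ := by
  refine intervalIntegral_pos_of_pos_on ((contD hw γ).intervalIntegrable _ _)
    (fun x hx => mul_pos (hpos x hx) (Real.exp_pos _)) Real.pi_pos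

lemma key_lt (hw : Continuous w) (hpos : ∀ x ∈ Set.Ioo (0:ℝ) Real.pi, 0 < w x)
    (hnn : ∀ x ∈ Set.Icc (0:ℝ) Real.pi, 0 ≤ w x) {α β : ℝ} (hab : α < β) :
    NN w α * DD w β < NN w β * DD w α := by
  set F : ℝ → ℝ → ℝ := fun x y =>
    (Real.cos x - Real.cos y) * (w x * w y) *
      (Real.exp (β * Real.cos x + α * Real.cos y) -
        Real.exp (α * Real.cos x + β * Real.cos y)) with hF
  -- pointwise nonnegativity
  have hF0 : ∀ x ∈ Set.Icc (0:ℝ) Real.pi, ∀ y ∈ Set.Icc (0:ℝ) Real.pi, 0 ≤ F x y := by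
    intro x hx y hy
    simp only [hF]
    have hwx := hnn x hx
    have hwy := hnn y hy
    have hW : 0 ≤ w x * w y := mul_nonneg hwx hwy
    rcases le_total (Real.cos y) (Real.cos x) with h | h
    · have hE : Real.exp (α * Real.cos x + β * Real.cos y) ≤
          Real.exp (β * Real.cos x + α * Real.cos y) :=
        Real.exp_le_exp.2 (by nlinarith)
      exact mul_nonneg (mul_nonneg (by linarith) hW) (by linarith)
    · have hE : Real.exp (β * Real.cos x + α * Real.cos y) ≤
          Real.exp (α * Real.cos x + β * Real.cos y) :=
        Real.exp_le_exp.2 (by nlinarith)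
      have h1 : 0 ≤ ((Real.cos y - Real.cos x) * (w x * w y)) *
          (Real.exp (α * Real.cos x + β * Real.cos y) -
            Real.exp (β * Real.cos x + α * Real.cos y)) :=
        mul_nonneg (mul_nonneg (by linarith) hW) (by linarith)
      nlinarith [h1]
  -- inner integral is positive
  have hB : ∀ x ∈ Set.Ioo (0:ℝ) Real.pi, 0 < ∫ y in (0:ℝ)..Real.pi, F x y := by
    intro x hx
    have hcont : ContinuousOn (fun y => F x y) (Set.Icc 0 Real.pi) := by
      apply Continuous.continuousOn
      fun_prop
    have hxIcc : x ∈ Set.Icc (0:ℝ) Real.pi := ⟨hx.1.le, hx.2.le⟩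
    have hxhalf : x / 2 ∈ Set.Ioo (0:ℝ) Real.pi := ⟨by linarith [hx.1], by linarith [hx.1, hx.2]⟩
    have hcc : Real.cos x < Real.cos (x / 2) := by
      have := Real.strictAntiOn_cos ⟨hxhalf.1.le, hxhalf.2.le⟩ ⟨hx.1.le, hx.2.le⟩
        (by linarith [hx.1])
      exact this
    have hFc : 0 < F x (x / 2) := by
      have hE : Real.exp (β * Real.cos x + α * Real.cos (x / 2)) <
          Real.exp (α * Real.cos x + β * Real.cos (x / 2)) :=
        Real.exp_lt_exp.2 (by nlinarith)
      have hW : 0 < w x * w (x / 2) := mul_pos (hpos x hx) (hpos _ hxhalf)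
      have : 0 < ((Real.cos (x / 2) - Real.cos x) * (w x * w (x / 2))) *
          (Real.exp (α * Real.cos x + β * Real.cos (x / 2)) -
            Real.exp (β * Real.cos x + α * Real.cos (x / 2))) :=
        mul_pos (mul_pos (by linarith) hW) (by linarith)
      rw [hF]; nlinarith [this]
    have := integral_lt_integral_of_continuousOn_of_le_of_exists_lt Real.pi_pos
      continuousOn_const hcont
      (fun y hy => hF0 x hxIcc y ⟨hy.1.le, hy.2⟩)
      ⟨x / 2, ⟨hxhalf.1.le, hxhalf.2.le⟩, hFc⟩
    simpa using this
  -- evaluate the inner integral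
  set G : ℝ → ℝ := fun x =>
    (w x * Real.exp (β * Real.cos x)) * (Real.cos x * DD w α - NN w α) +
    (w x * Real.exp (α * Real.cos x)) * (NN w β - Real.cos x * DD w β) with hG
  have hiD : ∀ γ : ℝ, IntervalIntegrable (fun θ => w θ * Real.exp (γ * Real.cos θ))
      volume 0 Real.pi := fun γ => (contD hw γ).intervalIntegrable _ _
  have hiN : ∀ γ : ℝ, IntervalIntegrable (fun θ => Real.cos θ * w θ * Real.exp (γ * Real.cos θ))
      volume 0 Real.pi := fun γ => (contN hw γ).intervalIntegrable _ _
  have h_inner : ∀ x : ℝ, (∫ y in (0:ℝ)..Real.pi, F x y) = G x := by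
    intro x
    have hptw : ∀ y ∈ Set.uIcc (0:ℝ) Real.pi, F x y =
        (Real.cos x * w x * Real.exp (β * Real.cos x)) * (w y * Real.exp (α * Real.cos y)) -
        (w x * Real.exp (β * Real.cos x)) * (Real.cos y * w y * Real.exp (α * Real.cos y)) -
        ((Real.cos x * w x * Real.exp (α * Real.cos x)) * (w y * Real.exp (β * Real.cos y)) -
         (w x * Real.exp (α * Real.cos x)) * (Real.cos y * w y * Real.exp (β * Real.cos y))) := by
      intro y _
      rw [hF]
      simp only [Real.exp_add]
      ring
    rw [intervalIntegral.integral_congr hptw,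
      intervalIntegral.integral_sub
        (((hiD α).const_mul _).sub ((hiN α).const_mul _))
        (((hiD β).const_mul _).sub ((hiN β).const_mul _)),
      intervalIntegral.integral_sub ((hiD α).const_mul _) ((hiN α).const_mul _),
      intervalIntegral.integral_sub ((hiD β).const_mul _) ((hiN β).const_mul _),
      intervalIntegral.integral_const_mul, intervalIntegral.integral_const_mul,
      intervalIntegral.integral_const_mul, intervalIntegral.integral_const_mul]
    rw [hG]
    show _ = _
    rw [show (∫ θ in (0:ℝ)..Real.pi, w θ * Real.exp (α * Real.cos θ)) = DD w α from rfl,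
      show (∫ θ in (0:ℝ)..Real.pi, w θ * Real.exp (β * Real.cos θ)) = DD w β from rfl,
      show (∫ θ in (0:ℝ)..Real.pi, Real.cos θ * w θ * Real.exp (α * Real.cos θ)) = NN w α from rfl,
      show (∫ θ in (0:ℝ)..Real.pi, Real.cos θ * w θ * Real.exp (β * Real.cos θ)) = NN w β from rfl]
    ring
  -- integrate G
  have hGpos : ∀ x ∈ Set.Ioo (0:ℝ) Real.pi, 0 < G x := by
    intro x hx
    rw [← h_inner x]
    exact hB x hx
  have hGcont : Continuous G := by rw [hG]; fun_prop
  have hGint : 0 < ∫ x in (0:ℝ)..Real.pi, G x :=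
    intervalIntegral_pos_of_pos_on (hGcont.intervalIntegrable _ _) hGpos Real.pi_pos
  have hGval : (∫ x in (0:ℝ)..Real.pi, G x) =
      2 * (NN w β * DD w α - NN w α * DD w β) := by
    have hptw : ∀ x ∈ Set.uIcc (0:ℝ) Real.pi, G x =
        (DD w α) * (Real.cos x * w x * Real.exp (β * Real.cos x)) -
        (NN w α) * (w x * Real.exp (β * Real.cos x)) -
        ((DD w β) * (Real.cos x * w x * Real.exp (α * Real.cos x)) -
         (NN w β) * (w x * Real.exp (α * Real.cos x))) := by
      intro x _; rw [hG]; ring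
    rw [intervalIntegral.integral_congr hptw,
      intervalIntegral.integral_sub
        (((hiN β).const_mul _).sub ((hiD β).const_mul _))
        (((hiN α).const_mul _).sub ((hiD α).const_mul _)),
      intervalIntegral.integral_sub ((hiN β).const_mul _) ((hiD β).const_mul _),
      intervalIntegral.integral_sub ((hiN α).const_mul _) ((hiD α).const_mul _),
      intervalIntegral.integral_const_mul, intervalIntegral.integral_const_mul,
      intervalIntegral.integral_const_mul, intervalIntegral.integral_const_mul]
    rw [show (∫ θ in (0:ℝ)..Real.pi, w θ * Real.exp (α * Real.cos θ)) = DD w α from rfl,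
      show (∫ θ in (0:ℝ)..Real.pi, w θ * Real.exp (β * Real.cos θ)) = DD w β from rfl,
      show (∫ θ in (0:ℝ)..Real.pi, Real.cos θ * w θ * Real.exp (α * Real.cos θ)) = NN w α from rfl,
      show (∫ θ in (0:ℝ)..Real.pi, Real.cos θ * w θ * Real.exp (β * Real.cos θ)) = NN w β from rfl]
    ring
  rw [hGval] at hGint
  linarith

lemma w1_pos : ∀ x ∈ Set.Ioo (0:ℝ) Real.pi, 0 < Real.sin (x/2) ^ 2 := by
  intro x hx
  have : 0 < Real.sin (x/2) :=
    Real.sin_pos_of_pos_of_lt_pi (by linarith [hx.1]) (by linarith [hx.1, hx.2, Real.pi_pos])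
  positivity

lemma w1_nn : ∀ x ∈ Set.Icc (0:ℝ) Real.pi, 0 ≤ Real.sin (x/2) ^ 2 := fun x _ => sq_nonneg _

lemma hc1 (α : ℝ) :
    c1 α = ((2 * NN (fun θ => Real.sin (θ/2) ^ 2) α + DD (fun θ => Real.sin (θ/2) ^ 2) α) / 3) /
      DD (fun θ => Real.sin (θ/2) ^ 2) α := by
  set w1 : ℝ → ℝ := fun θ => Real.sin (θ/2) ^ 2 with hw1
  have hiD : IntervalIntegrable (fun θ => w1 θ * Real.exp (α * Real.cos θ)) volume 0 Real.pi :=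
    (contD (by fun_prop) α).intervalIntegrable _ _
  have hiN : IntervalIntegrable (fun θ => Real.cos θ * w1 θ * Real.exp (α * Real.cos θ))
      volume 0 Real.pi := (contN (by fun_prop) α).intervalIntegrable _ _
  have hnum : (∫ θ in (0:ℝ)..Real.pi,
      (1/3) * (2 * Real.cos θ + 1) * Real.sin (θ/2) ^ 2 * Real.exp (α * Real.cos θ)) =
      (2 * NN w1 α + DD w1 α) / 3 := by
    have hptw : ∀ θ ∈ Set.uIcc (0:ℝ) Real.pi,
        (1/3) * (2 * Real.cos θ + 1) * Real.sin (θ/2) ^ 2 * Real.exp (α * Real.cos θ) =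
        (2/3) * (Real.cos θ * w1 θ * Real.exp (α * Real.cos θ)) +
        (1/3) * (w1 θ * Real.exp (α * Real.cos θ)) := by
      intro θ _; rw [hw1]; ring
    rw [intervalIntegral.integral_congr hptw,
      intervalIntegral.integral_add (hiN.const_mul _) (hiD.const_mul _),
      intervalIntegral.integral_const_mul, intervalIntegral.integral_const_mul]
    rw [show (∫ θ in (0:ℝ)..Real.pi, w1 θ * Real.exp (α * Real.cos θ)) = DD w1 α from rfl,
      show (∫ θ in (0:ℝ)..Real.pi, Real.cos θ * w1 θ * Real.exp (α * Real.cos θ)) = NN w1 α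
        from rfl]
    ring
  show (∫ θ in (0:ℝ)..Real.pi,
      (1/3) * (2 * Real.cos θ + 1) * Real.sin (θ/2) ^ 2 * Real.exp (α * Real.cos θ)) /
    (∫ θ in (0:ℝ)..Real.pi, Real.sin (θ/2) ^ 2 * Real.exp (α * Real.cos θ)) = _
  rw [hnum]
  rfl

lemma hc2 (α : ℝ) :
    c2 α = (1 / Real.sqrt 3) *
      (NN Real.sin (Real.sqrt 3 / 2 * α) / DD Real.sin (Real.sqrt 3 / 2 * α)) := rfl

/-- The functions `c₁` and `c₂` are strictly increasing on `ℝ` and vanish at `0`. -/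
theorem c1_c2_strictMono_and_zero :
    StrictMono c1 ∧ StrictMono c2 ∧ c1 0 = 0 ∧ c2 0 = 0 := by
  have hw1c : Continuous fun θ : ℝ => Real.sin (θ/2) ^ 2 := by fun_prop
  have hsinpos : ∀ x ∈ Set.Ioo (0:ℝ) Real.pi, 0 < Real.sin x :=
    fun x hx => Real.sin_pos_of_pos_of_lt_pi hx.1 hx.2
  have hsinnn : ∀ x ∈ Set.Icc (0:ℝ) Real.pi, 0 ≤ Real.sin x :=
    fun x hx => Real.sin_nonneg_of_nonneg_of_le_pi hx.1 hx.2
  refine ⟨?_, ?_, ?_, ?_⟩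
  · intro a b hab
    have hDa := DD_pos hw1c w1_pos a
    have hDb := DD_pos hw1c w1_pos b
    have hk := key_lt hw1c w1_pos w1_nn hab
    rw [hc1 a, hc1 b, div_lt_div_iff₀ hDa hDb]
    nlinarith [hk]
  · intro a b hab
    have hab' : Real.sqrt 3 / 2 * a < Real.sqrt 3 / 2 * b := by
      have h3 : (0:ℝ) < Real.sqrt 3 := Real.sqrt_pos.2 (by norm_num)
      exact mul_lt_mul_of_pos_left hab (by positivity)
    have hDa := DD_pos Real.continuous_sin hsinpos (Real.sqrt 3 / 2 * a)
    have hDb := DD_pos Real.continuous_sin hsinpos (Real.sqrt 3 / 2 * b)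
    have hk := key_lt Real.continuous_sin hsinpos hsinnn hab'
    rw [hc2 a, hc2 b]
    have h3 : (0:ℝ) < Real.sqrt 3 := Real.sqrt_pos.2 (by norm_num)
    apply mul_lt_mul_of_pos_left _ (by positivity)
    rw [div_lt_div_iff₀ hDa hDb]
    linarith
  · -- c1 0 = 0
    have hnum : (∫ θ in (0:ℝ)..Real.pi,
        (1/3) * (2 * Real.cos θ + 1) * Real.sin (θ/2) ^ 2 *
          Real.exp ((0:ℝ) * Real.cos θ)) = 0 := by
      have hptw : ∀ θ ∈ Set.uIcc (0:ℝ) Real.pi,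
          (1/3) * (2 * Real.cos θ + 1) * Real.sin (θ/2) ^ 2 *
            Real.exp ((0:ℝ) * Real.cos θ) =
          (1/6) * Real.cos θ - (1/6) * Real.cos (2*θ) := by
        intro θ _
        have hA : Real.cos θ = 2 * Real.cos (θ/2) ^ 2 - 1 := by
          have := Real.cos_two_mul (θ/2)
          rw [show 2 * (θ/2) = θ by ring] at this
          exact this
        have hB := Real.sin_sq_add_cos_sq (θ/2)
        have hC := Real.cos_two_mul θ
        simp only [zero_mul, Real.exp_zero, mul_one]
        linear_combination (1/6) * hC + ((2*Real.cos θ + 1)/3) * hB +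
          ((2*Real.cos θ + 1)/6) * hA
      have h2 : (∫ θ in (0:ℝ)..Real.pi, Real.cos (2*θ)) = 0 := by
        rw [intervalIntegral.integral_comp_mul_left Real.cos (two_ne_zero)]
        simp [integral_cos, Real.sin_two_pi]
      rw [intervalIntegral.integral_congr hptw,
        intervalIntegral.integral_sub
          ((Real.continuous_cos.intervalIntegrable _ _).const_mul _)
          (((by fun_prop : Continuous fun θ : ℝ => Real.cos (2*θ)).intervalIntegrable
            _ _).const_mul _),
        intervalIntegral.integral_const_mul, intervalIntegral.integral_const_mul,
        integral_cos, h2]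
      simp
    show (∫ θ in (0:ℝ)..Real.pi,
        (1/3) * (2 * Real.cos θ + 1) * Real.sin (θ/2) ^ 2 *
          Real.exp ((0:ℝ) * Real.cos θ)) /
      (∫ θ in (0:ℝ)..Real.pi, Real.sin (θ/2) ^ 2 * Real.exp ((0:ℝ) * Real.cos θ)) = 0
    rw [hnum, zero_div]
  · -- c2 0 = 0
    rw [hc2 0]
    have hN : NN Real.sin (Real.sqrt 3 / 2 * 0) = 0 := by
      show (∫ θ in (0:ℝ)..Real.pi,
        Real.cos θ * Real.sin θ * Real.exp ((Real.sqrt 3 / 2 * 0) * Real.cos θ)) = 0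
      simp only [mul_zero, zero_mul, Real.exp_zero, mul_one]
      rw [intervalIntegral.integral_congr
        (g := fun θ => Real.sin θ * Real.cos θ) (fun θ _ => mul_comm _ _),
        integral_sin_mul_cos₁]
      simp
    rw [hN, zero_div, mul_zero]
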